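/- Fix an integer p ≥ 1 and a real number α_p, and set X_p := (1/2) F^{−1}_0 + α_p F^p_p. Then for every integer l ≥ 0 the vector field T_l := ( (y²+z²)(y²+z² + 2 α_p x^{p+1}) )^l · (z ∂_y − y ∂_z) commutes with X_p, i.e. [X_p, T_l] = 0. (Equivalently, the l-th power of the first integral (y²+z²)² /2 + α_p x^{p+1}(y²+z²) of X_p, multiplied by the rotation field Θ^0_0 = z ∂_y − y ∂_z, lies in the kernel of ad(X_p).) -/
import Mathlib


noncomputable section
open MvPolynomial

/-- Polynomial functions of the variables x, y, z (indexed `0, 1, 2`). -/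
abbrev Poly3 := MvPolynomial (Fin 3) ℝ

/-- Polynomial vector fields on ℝ³, given by their three components. -/
abbrev VF3 := Fin 3 → Poly3

/-- The derivation action `v(g) = v₁ ∂g/∂x + v₂ ∂g/∂y + v₃ ∂g/∂z`. -/
def applyVF (v : VF3) (g : Poly3) : Poly3 := ∑ i, v i * pderiv i g

/-- The Lie bracket `[v,w] := v∘w − w∘v`, with i-th component `v(wᵢ) − w(vᵢ)`. -/
def bracket (v w : VF3) : VF3 := fun i => applyVF v (w i) - applyVF w (v i)

/-- The divergence `div v = ∂v₁/∂x + ∂v₂/∂y + ∂v₃/∂z`. -/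
def divergence (v : VF3) : Poly3 := ∑ i, pderiv i (v i)

/-- The vector field `F^l_k := x^l (y²+z²)^{k−l} ((k−l+1) x ∂_x − ((l+1)/2) y ∂_y − ((l+1)/2) z ∂_z)`
for integers `−1 ≤ l ≤ k`; for `l = −1` the second and third components vanish and this is
`(k+2)(y²+z²)^{k+1} ∂_x`. -/
def Fvf (l k : ℤ) : VF3 :=
  ![C ((k - l + 1 : ℤ) : ℝ) * X 0 ^ (l + 1).toNat * (X 1 ^ 2 + X 2 ^ 2) ^ (k - l).toNat,
    C (-((l + 1 : ℤ) : ℝ) / 2) * X 0 ^ l.toNat * X 1 * (X 1 ^ 2 + X 2 ^ 2) ^ (k - l).toNat,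
    C (-((l + 1 : ℤ) : ℝ) / 2) * X 0 ^ l.toNat * X 2 * (X 1 ^ 2 + X 2 ^ 2) ^ (k - l).toNat]

/-- The vector field `Θ^m_n := x^m (y²+z²)^{n−m} (z ∂_y − y ∂_z)` for integers `0 ≤ m ≤ n`. -/
def Tvf (m n : ℤ) : VF3 :=
  ![0,
    X 0 ^ m.toNat * (X 1 ^ 2 + X 2 ^ 2) ^ (n - m).toNat * X 2,
    -(X 0 ^ m.toNat * (X 1 ^ 2 + X 2 ^ 2) ^ (n - m).toNat * X 1)]

lemma applyVF_mul (v : VF3) (g h : Poly3) :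
    applyVF v (g * h) = applyVF v g * h + g * applyVF v h := by
  unfold applyVF
  rw [Finset.sum_mul, Finset.mul_sum, ← Finset.sum_add_distrib]
  refine Finset.sum_congr rfl fun i _ => ?_
  rw [pderiv_mul]; ring

lemma applyVF_pow_eq_zero (v : VF3) (g : Poly3) (h : applyVF v g = 0) (l : ℕ) :
    applyVF v (g ^ l) = 0 := by
  induction l with
  | zero => simp [applyVF]
  | succ n ih => rw [pow_succ, applyVF_mul, ih, h]; ring

lemma applyVF_mul_left (w : VF3) (g f : Poly3) :
    applyVF (fun j => g * w j) f = g * applyVF w f := by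
  unfold applyVF
  rw [Finset.mul_sum]
  exact Finset.sum_congr rfl fun i _ => by ring

lemma bracket_mul_right (v w : VF3) (g : Poly3) :
    bracket v (fun j => g * w j) =
      fun i => applyVF v g * w i + g * bracket v w i := by
  funext i
  simp only [bracket, applyVF_mul, applyVF_mul_left]
  ring

/-- with `X_p := (1/2)F^{−1}_0 + α_p F^p_p` (`p ≥ 1`), for every `l ≥ 0` the
vector field `T_l := ((y²+z²)(y²+z²+2α_p x^{p+1}))^l (z∂_y − y∂_z)` commutes with `X_p`. -/
theorem power_of_first_integral_times_rotation_commutes (p : ℤ) (hp : 1 ≤ p) (αp : ℝ)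
    (l : ℕ) :
    bracket (fun j => (1 / 2 : ℝ) • Fvf (-1) 0 j + αp • Fvf p p j)
      (fun j => ((X 1 ^ 2 + X 2 ^ 2) *
        (X 1 ^ 2 + X 2 ^ 2 + C (2 * αp) * X 0 ^ (p + 1).toNat)) ^ l * Tvf 0 0 j)
      = 0 := by
  lift p to ℕ using (by omega) with n
  have hn1 : ((n : ℤ) + 1).toNat = n + 1 := by omega
  rw [hn1]
  set G : Poly3 := (X 1 ^ 2 + X 2 ^ 2) *
      (X 1 ^ 2 + X 2 ^ 2 + C (2 * αp) * X 0 ^ (n + 1)) with hGdef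
  set c : Poly3 := C (-(((n : ℤ) + 1 : ℤ) : ℝ) / 2) with hcdef
  -- explicit formulas for the components of the vector field
  have h0 : (1 / 2 : ℝ) • Fvf (-1) 0 0 + αp • Fvf (n : ℤ) (n : ℤ) 0
      = (X 1 ^ 2 + X 2 ^ 2) + C αp * X 0 ^ (n + 1) := by
    simp [Fvf, smul_eq_C_mul, hn1]
    rw [← mul_assoc, ← map_mul]
    norm_num
  have h1 : (1 / 2 : ℝ) • Fvf (-1) 0 1 + αp • Fvf (n : ℤ) (n : ℤ) 1
      = C αp * (c * X 0 ^ n * X 1) := by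
    simp [Fvf, smul_eq_C_mul, hcdef]
  have h2 : (1 / 2 : ℝ) • Fvf (-1) 0 2 + αp • Fvf (n : ℤ) (n : ℤ) 2
      = C αp * (c * X 0 ^ n * X 2) := by
    simp [Fvf, smul_eq_C_mul, hcdef]
  -- derivatives of G
  have hGx : pderiv 0 G = C (2 * αp) * ((n + 1 : ℕ) : Poly3) * X 0 ^ n *
      (X 1 ^ 2 + X 2 ^ 2) := by
    simp [hGdef, pderiv_mul, pderiv_pow, Nat.add_sub_cancel]
    ring
  have hGy : pderiv 1 G = 4 * X 1 * (X 1 ^ 2 + X 2 ^ 2) +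
      2 * C (2 * αp) * X 1 * X 0 ^ (n + 1) := by
    simp [hGdef, pderiv_mul, pderiv_pow]
    ring
  have hGz : pderiv 2 G = 4 * X 2 * (X 1 ^ 2 + X 2 ^ 2) +
      2 * C (2 * αp) * X 2 * X 0 ^ (n + 1) := by
    simp [hGdef, pderiv_mul, pderiv_pow]
    ring
  -- the constant relations
  have keyC : (2 : Poly3) * c + ((n + 1 : ℕ) : Poly3) = 0 := by
    rw [hcdef, show ((n + 1 : ℕ) : Poly3) = C ((n + 1 : ℕ) : ℝ) from (map_natCast C (n + 1)).symm,
      show ((2 : Poly3)) = C (2 : ℝ) from (map_ofNat C 2).symm, ← map_mul, ← map_add,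
      show (2 : ℝ) * (-(((n : ℤ) + 1 : ℤ) : ℝ) / 2) + ((n + 1 : ℕ) : ℝ) = 0 by push_cast; ring,
      map_zero]
  have keyD : (C (2 * αp) : Poly3) = 2 * C αp := by
    rw [C_mul, map_ofNat]
  -- G is a first integral of the vector field
  have hG : applyVF (fun j => (1 / 2 : ℝ) • Fvf (-1) 0 j + αp • Fvf (n : ℤ) (n : ℤ) j) G
      = 0 := by
    simp only [applyVF, Fin.sum_univ_three]
    rw [h0, h1, h2, hGx, hGy, hGz]
    linear_combination (X 0 ^ n * X 0 ^ (n + 1) * (X 1 ^ 2 + X 2 ^ 2) * C αp * C (2 * αp)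
        + 2 * C αp * X 0 ^ n * (X 1 ^ 2 + X 2 ^ 2) ^ 2) * keyC +
      (((n + 1 : ℕ) : Poly3) * X 0 ^ n * (X 1 ^ 2 + X 2 ^ 2) ^ 2) * keyD
  -- the vector field commutes with the rotation field
  have hT : bracket (fun j => (1 / 2 : ℝ) • Fvf (-1) 0 j + αp • Fvf (n : ℤ) (n : ℤ) j)
      (Tvf 0 0) = 0 := by
    funext i
    fin_cases i <;>
    · simp only [bracket, applyVF, Fin.sum_univ_three]
      simp [Fvf, Tvf, smul_eq_C_mul, pderiv_mul, pderiv_pow, Nat.add_sub_cancel,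
        Int.toNat_natCast, hn1]
      try ring
  rw [show (fun j => G ^ l * Tvf 0 0 j) = (fun j => (G ^ l) * Tvf 0 0 j) from rfl,
    bracket_mul_right, applyVF_pow_eq_zero _ G hG, hT]
  funext i
  simp
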